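/- arXiv:1104.5634 — 4 statements merged into one kernel-verified Lean document; each statement's English description precedes it below -/
import Mathlib

section
/- For any two labels ℓ and ℓ' with anchor points p ∈ ℓ and p' ∈ ℓ', the conflict set C(ℓ,ℓ'), viewed as a subset of the circle ℝ/2πℤ, is the union of at most four closed circular arcs (i.e., there exist at most four closed arcs of the circle whose union equals C(ℓ,ℓ')). -/
open Real Set

/-- Rotation of the plane about the origin by angle `α` (counterclockwise). -/
noncomputable def rot (α : ℝ) (v : ℝ × ℝ) : ℝ × ℝ :=
  (v.1 * Real.cos α - v.2 * Real.sin α, v.1 * Real.sin α + v.2 * Real.cos α)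

/-- The image of a set under rotation by `α` about the point `p`. -/
noncomputable def rotAbout (p : ℝ × ℝ) (α : ℝ) (s : Set (ℝ × ℝ)) : Set (ℝ × ℝ) :=
  (fun x => p + rot α (x - p)) '' s

/-- The closed axis-aligned rectangle containing its anchor point `p`, with distances
`wl, wr, hb, ht` from `p` to the left, right, bottom and top sides. -/
noncomputable def rectLabel (p : ℝ × ℝ) (wl wr hb ht : ℝ) : Set (ℝ × ℝ) :=
  Set.Icc (p.1 - wl, p.2 - hb) (p.1 + wr, p.2 + ht)

/-- A closed circular arc of the circle `ℝ/2πℤ` (possibly empty, possibly the full circle):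
the image of a closed interval of `ℝ` under the projection `ℝ → ℝ/2πℤ`. -/
def IsClosedArc (S : Set Real.Angle) : Prop :=
  ∃ a b : ℝ, S = (fun x : ℝ => (x : Real.Angle)) '' Set.Icc a b

/-- The conflict set of two labels, as a subset of the circle `ℝ/2πℤ`: the set of
rotation angles at which the two rotated labels intersect. -/
noncomputable def conflictSet (p p' : ℝ × ℝ) (ℓ ℓ' : Set (ℝ × ℝ)) : Set Real.Angle :=
  {θ | ∃ α : ℝ, (α : Real.Angle) = θ ∧ (rotAbout p α ℓ ∩ rotAbout p' α ℓ').Nonempty}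

/-!
The rotated labels meet iff `rot (-α) (p' - p)` lies in the Minkowski difference of the two
labels translated so that their anchors sit at the origin, and for labels with nonempty sides this
difference is again an axis-parallel box. Writing `p' - p = r (cos φ, sin φ)`, the coordinates of
`rot (-α) (p' - p)` are `r cos (α - φ)` and `-r sin (α - φ)`, both monotone on each quarter-turn
`α - φ ∈ [kπ/2, (k+1)π/2]`. So within each quarter-turn the conflicting angles form a closed
interval (a compact order-connected set), and by periodicity four quarter-turns cover the circle.
-/

open Function
open scoped Pointwise

namespace Set

lemma Icc_sub_Icc {α : Type*} [AddCommGroup α] [LinearOrder α] [IsOrderedAddMonoid α]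
    {a b c d : α} (hab : a ≤ b) (hcd : c ≤ d) : Icc a b - Icc c d = Icc (a - d) (b - c) := by
  rw [sub_eq_add_neg, neg_Icc, Icc_add_Icc hab (neg_le_neg hcd), ← sub_eq_add_neg,
    ← sub_eq_add_neg]

lemma OrdConnected.inter_preimage {α β : Type*} [Preorder α] [Preorder β] {s : Set α}
    {t : Set β} {f : α → β} (hs : s.OrdConnected) (ht : t.OrdConnected)
    (hf : MonotoneOn f s ∨ AntitoneOn f s) : (s ∩ f ⁻¹' t).OrdConnected := by
  refine ⟨fun x hx y hy z hz => ?_⟩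
  have hzs : z ∈ s := hs.out hx.1 hy.1 hz
  refine ⟨hzs, ?_⟩
  rcases hf with hf | hf
  · exact ht.out hx.2 hy.2 ⟨hf hx.1 hzs hz.1, hf hzs hy.1 hz.2⟩
  · exact ht.out hy.2 hx.2 ⟨hf hzs hy.1 hz.2, hf hx.1 hzs hz.1⟩

lemma exists_eq_Icc_of_isCompact_of_ordConnected {α : Type*} [ConditionallyCompleteLinearOrder α]
    [TopologicalSpace α] [OrderTopology α] [DenselyOrdered α] [Nontrivial α] {s : Set α}
    (hc : IsCompact s) (ho : s.OrdConnected) : ∃ a b, s = Icc a b := by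
  rcases s.eq_empty_or_nonempty with rfl | hne
  · obtain ⟨a, b, hab⟩ := exists_pair_lt α
    exact ⟨b, a, (Icc_eq_empty_of_lt hab).symm⟩
  · exact ⟨_, _, eq_Icc_of_connected_compact ⟨hne, ho.isPreconnected⟩ hc⟩

end Set

lemma monotoneOn_or_antitoneOn_const_mul_comp_sub {f : ℝ → ℝ} {c d : ℝ}
    (hf : MonotoneOn f (Icc c d) ∨ AntitoneOn f (Icc c d)) (r φ : ℝ) :
    MonotoneOn (fun α => r * f (α - φ)) (Icc (φ + c) (φ + d)) ∨
      AntitoneOn (fun α => r * f (α - φ)) (Icc (φ + c) (φ + d)) := by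
  have hmaps : MapsTo (fun α => α - φ) (Icc (φ + c) (φ + d)) (Icc c d) :=
    fun α hα => ⟨by linarith [hα.1], by linarith [hα.2]⟩
  rcases hf with hf | hf <;> rcases le_total 0 r with hr | hr
  · exact Or.inl fun x hx y hy h =>
      mul_le_mul_of_nonneg_left (hf (hmaps hx) (hmaps hy) (sub_le_sub_right h φ)) hr
  · exact Or.inr fun x hx y hy h =>
      mul_le_mul_of_nonpos_left (hf (hmaps hx) (hmaps hy) (sub_le_sub_right h φ)) hr
  · exact Or.inr fun x hx y hy h =>
      mul_le_mul_of_nonneg_left (hf (hmaps hx) (hmaps hy) (sub_le_sub_right h φ)) hr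
  · exact Or.inl fun x hx y hy h =>
      mul_le_mul_of_nonpos_left (hf (hmaps hx) (hmaps hy) (sub_le_sub_right h φ)) hr

lemma exists_Icc_eq_Icc_inter_preimage_Icc_prod_Icc {f g : ℝ → ℝ} {a b : ℝ}
    (hfc : Continuous f) (hgc : Continuous g)
    (hf : MonotoneOn f (Icc a b) ∨ AntitoneOn f (Icc a b))
    (hg : MonotoneOn g (Icc a b) ∨ AntitoneOn g (Icc a b)) (c₁ d₁ c₂ d₂ : ℝ) :
    ∃ u v, Icc a b ∩ (fun x => (f x, g x)) ⁻¹' (Icc c₁ d₁ ×ˢ Icc c₂ d₂) = Icc u v := by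
  rw [mk_preimage_prod, inter_inter_distrib_left]
  refine exists_eq_Icc_of_isCompact_of_ordConnected ?_ ?_
  · exact (isCompact_Icc.inter_right (isClosed_Icc.preimage hfc)).inter_right
      (isClosed_Icc.inter (isClosed_Icc.preimage hgc))
  · exact (ordConnected_Icc.inter_preimage ordConnected_Icc hf).inter
      (ordConnected_Icc.inter_preimage ordConnected_Icc hg)

namespace Real

lemma monotoneOn_cos_Icc_neg_pi_zero : MonotoneOn cos (Icc (-π) 0) := fun x hx y hy h => by
  simpa only [cos_neg] using
    antitoneOn_cos ⟨neg_nonneg.2 hy.2, neg_le.1 hy.1⟩ ⟨neg_nonneg.2 hx.2, neg_le.1 hx.1⟩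
      (neg_le_neg h)

lemma antitoneOn_sin_Icc_pi_div_two_pi : AntitoneOn sin (Icc (π / 2) π) := fun x hx y hy h => by
  simpa only [cos_sub_pi_div_two] using
    antitoneOn_cos ⟨by linarith [hx.1], by linarith [hx.2, pi_pos]⟩
      ⟨by linarith [hy.1], by linarith [hy.2, pi_pos]⟩ (sub_le_sub_right h (π / 2))

lemma antitoneOn_sin_Icc_neg_pi_neg_pi_div_two : AntitoneOn sin (Icc (-π) (-(π / 2))) :=
  fun x hx y hy h => by
    simpa only [sin_neg, neg_le_neg_iff] using
      antitoneOn_sin_Icc_pi_div_two_pi ⟨le_neg.1 hy.2, neg_le.1 hy.1⟩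
        ⟨le_neg.1 hx.2, neg_le.1 hx.1⟩ (neg_le_neg h)

end Real

lemma rot_neg_rot (α : ℝ) (v : ℝ × ℝ) : rot (-α) (rot α v) = v := by
  obtain ⟨x, y⟩ := v
  simp only [rot, cos_neg, sin_neg, Prod.mk.injEq]
  constructor
  · linear_combination x * sin_sq_add_cos_sq α
  · linear_combination y * sin_sq_add_cos_sq α

lemma rot_sub (α : ℝ) (u v : ℝ × ℝ) : rot α (u - v) = rot α u - rot α v := by
  simp only [rot, Prod.fst_sub, Prod.snd_sub, Prod.mk_sub_mk, Prod.mk.injEq]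
  constructor <;> ring

lemma rot_neg_polar (r φ α : ℝ) :
    rot (-α) (r * cos φ, r * sin φ) = (r * cos (α - φ), -r * sin (α - φ)) := by
  simp only [rot, cos_neg, sin_neg, cos_sub, sin_sub, Prod.mk.injEq]
  constructor <;> ring

lemma exists_polar (q : ℝ × ℝ) : ∃ r φ : ℝ, q = (r * cos φ, r * sin φ) :=
  ⟨‖(⟨q.1, q.2⟩ : ℂ)‖, Complex.arg ⟨q.1, q.2⟩,
    by rw [Complex.norm_mul_cos_arg, Complex.norm_mul_sin_arg]⟩

lemma add_rot_eq_add_rot_iff (p p' u v : ℝ × ℝ) (α : ℝ) :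
    p + rot α u = p' + rot α v ↔ u - v = rot (-α) (p' - p) := by
  rw [← add_comm (rot α u), ← sub_eq_sub_iff_add_eq_add, ← rot_sub]
  constructor
  · intro h
    rw [← h, rot_neg_rot]
  · intro h
    simpa only [h, neg_neg] using rot_neg_rot (-α) (p' - p)

lemma Real.Angle.image_coe_eq_image_coe_Icc_inter {X : Type*} {f : ℝ → X}
    (hf : Periodic f (2 * π)) (B : Set X) (a : ℝ) :
    ((↑) : ℝ → Angle) '' (f ⁻¹' B) = (↑) '' (Icc a (a + 2 * π) ∩ f ⁻¹' B) := by
  refine Subset.antisymm ?_ (image_mono inter_subset_right)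
  rintro _ ⟨α, hα, rfl⟩
  refine ⟨toIcoMod two_pi_pos a α, ⟨Ico_subset_Icc_self (toIcoMod_mem_Ico _ _ _), ?_⟩,
    Angle.coe_toIcoMod α a⟩
  rwa [mem_preimage, toIcoMod, hf.sub_zsmul_eq]

theorem exists_four_closedArcs_eq_image_preimage_rot (q : ℝ × ℝ) (c₁ d₁ c₂ d₂ : ℝ) :
    ∃ A₁ A₂ A₃ A₄ : Set Angle,
      IsClosedArc A₁ ∧ IsClosedArc A₂ ∧ IsClosedArc A₃ ∧ IsClosedArc A₄ ∧
      ((↑) : ℝ → Angle) '' ((fun α => rot (-α) q) ⁻¹' (Icc c₁ d₁ ×ˢ Icc c₂ d₂)) =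
        A₁ ∪ A₂ ∪ A₃ ∪ A₄ := by
  obtain ⟨r, φ, rfl⟩ := exists_polar q
  simp only [rot_neg_polar]
  have quarter : ∀ c d, (MonotoneOn cos (Icc c d) ∨ AntitoneOn cos (Icc c d)) →
      (MonotoneOn sin (Icc c d) ∨ AntitoneOn sin (Icc c d)) →
      ∃ u v, Icc (φ + c) (φ + d) ∩ (fun α => (r * cos (α - φ), -r * sin (α - φ))) ⁻¹'
        (Icc c₁ d₁ ×ˢ Icc c₂ d₂) = Icc u v := fun c d hcos hsin =>
    exists_Icc_eq_Icc_inter_preimage_Icc_prod_Icc (by fun_prop) (by fun_prop)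
      (monotoneOn_or_antitoneOn_const_mul_comp_sub hcos r φ)
      (monotoneOn_or_antitoneOn_const_mul_comp_sub hsin (-r) φ) _ _ _ _
  have hπ := pi_pos
  obtain ⟨u₁, v₁, h₁⟩ := quarter (-π) (-(π / 2))
    (.inl (monotoneOn_cos_Icc_neg_pi_zero.mono (Icc_subset_Icc_right (by linarith))))
    (.inr antitoneOn_sin_Icc_neg_pi_neg_pi_div_two)
  obtain ⟨u₂, v₂, h₂⟩ := quarter (-(π / 2)) 0
    (.inl (monotoneOn_cos_Icc_neg_pi_zero.mono (Icc_subset_Icc_left (by linarith))))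
    (.inl (monotoneOn_sin.mono (Icc_subset_Icc_right (by linarith))))
  obtain ⟨u₃, v₃, h₃⟩ := quarter 0 (π / 2)
    (.inr (antitoneOn_cos.mono (Icc_subset_Icc_right (by linarith))))
    (.inl (monotoneOn_sin.mono (Icc_subset_Icc_left (by linarith))))
  obtain ⟨u₄, v₄, h₄⟩ := quarter (π / 2) π
    (.inr (antitoneOn_cos.mono (Icc_subset_Icc_left (by linarith))))
    (.inr antitoneOn_sin_Icc_pi_div_two_pi)
  refine ⟨_, _, _, _, ⟨u₁, v₁, rfl⟩, ⟨u₂, v₂, rfl⟩, ⟨u₃, v₃, rfl⟩, ⟨u₄, v₄, rfl⟩, ?_⟩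
  have hper : Periodic (fun α => (r * cos (α - φ), -r * sin (α - φ))) (2 * π) := fun α => by
    simp only [add_sub_right_comm α, cos_add_two_pi, sin_add_two_pi]
  have hcover : Icc (φ + -π) (φ + π) = Icc (φ + -π) (φ + -(π / 2)) ∪
      Icc (φ + -(π / 2)) (φ + 0) ∪ Icc (φ + 0) (φ + π / 2) ∪ Icc (φ + π / 2) (φ + π) := by
    rw [Icc_union_Icc_eq_Icc, Icc_union_Icc_eq_Icc, Icc_union_Icc_eq_Icc] <;> linarith
  rw [Angle.image_coe_eq_image_coe_Icc_inter hper _ (φ + -π),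
    show φ + -π + 2 * π = φ + π by ring, hcover, union_inter_distrib_right,
    union_inter_distrib_right, union_inter_distrib_right, image_union, image_union, image_union,
    h₁, h₂, h₃, h₄]

lemma rotAbout_inter_rotAbout_nonempty_iff (p p' : ℝ × ℝ) (α : ℝ) (s s' : Set (ℝ × ℝ)) :
    (rotAbout p α s ∩ rotAbout p' α s').Nonempty ↔
      rot (-α) (p' - p) ∈ (· - p) '' s - (· - p') '' s' := by
  constructor
  · rintro ⟨_, ⟨x, hx, rfl⟩, y, hy, h⟩
    exact ⟨x - p, ⟨x, hx, rfl⟩, y - p', ⟨y, hy, rfl⟩, (add_rot_eq_add_rot_iff ..).1 h.symm⟩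
  · rintro ⟨_, ⟨x, hx, rfl⟩, _, ⟨y, hy, rfl⟩, h⟩
    exact ⟨_, ⟨x, hx, rfl⟩, y, hy, ((add_rot_eq_add_rot_iff ..).2 h).symm⟩

lemma conflictSet_eq_image_preimage (p p' : ℝ × ℝ) (ℓ ℓ' : Set (ℝ × ℝ)) :
    conflictSet p p' ℓ ℓ' = ((↑) : ℝ → Angle) ''
      ((fun α => rot (-α) (p' - p)) ⁻¹' ((· - p) '' ℓ - (· - p') '' ℓ')) := by
  ext θ
  simp only [conflictSet, mem_ofPred_eq, mem_image, mem_preimage,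
    rotAbout_inter_rotAbout_nonempty_iff, and_comm]

lemma image_sub_rectLabel (p : ℝ × ℝ) (wl wr hb ht : ℝ) :
    (· - p) '' rectLabel p wl wr hb ht = Icc (-wl) wr ×ˢ Icc (-hb) ht := by
  rw [rectLabel, image_sub_const_Icc, Icc_prod_Icc]
  congr 1 <;> ext <;> simp

lemma conflictSet_rectLabel (p p' : ℝ × ℝ) {wl wr hb ht wl' wr' hb' ht' : ℝ}
    (hw : 0 ≤ wl + wr) (hh : 0 ≤ hb + ht) (hw' : 0 ≤ wl' + wr') (hh' : 0 ≤ hb' + ht') :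
    conflictSet p p' (rectLabel p wl wr hb ht) (rectLabel p' wl' wr' hb' ht') =
      ((↑) : ℝ → Angle) '' ((fun α => rot (-α) (p' - p)) ⁻¹'
        (Icc (-(wl + wr')) (wr + wl') ×ˢ Icc (-(hb + ht')) (ht + hb'))) := by
  rw [conflictSet_eq_image_preimage, image_sub_rectLabel, image_sub_rectLabel,
    prod_sub_prod_comm, Icc_sub_Icc (neg_le_iff_add_nonneg'.2 hw) (neg_le_iff_add_nonneg'.2 hw'),
    Icc_sub_Icc (neg_le_iff_add_nonneg'.2 hh) (neg_le_iff_add_nonneg'.2 hh'),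
    sub_neg_eq_add, sub_neg_eq_add, ← neg_add', ← neg_add']

theorem conflictSet_union_four_arcs_general
    (p p' : ℝ × ℝ)
    (wl wr hb ht wl' wr' hb' ht' : ℝ)
    (hw : 0 < wl + wr) (hh : 0 < hb + ht) (hw' : 0 < wl' + wr') (hh' : 0 < hb' + ht') :
    ∃ A₁ A₂ A₃ A₄ : Set Real.Angle,
      IsClosedArc A₁ ∧ IsClosedArc A₂ ∧ IsClosedArc A₃ ∧ IsClosedArc A₄ ∧
      conflictSet p p' (rectLabel p wl wr hb ht) (rectLabel p' wl' wr' hb' ht') =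
        A₁ ∪ A₂ ∪ A₃ ∪ A₄ := by
  rw [conflictSet_rectLabel p p' hw.le hh.le hw'.le hh'.le]
  exact exists_four_closedArcs_eq_image_preimage_rot _ _ _ _ _

/-- For any two labels `ℓ` and `ℓ'` with anchor points `p ∈ ℓ`, `p' ∈ ℓ'`, the conflict set
`C(ℓ,ℓ')` is the union of at most four closed circular arcs. -/
theorem conflictSet_union_four_arcs
    (p p' : ℝ × ℝ) (hpp' : p ≠ p')
    (wl wr hb ht wl' wr' hb' ht' : ℝ)
    (hwl : 0 ≤ wl) (hwr : 0 ≤ wr) (hhb : 0 ≤ hb) (hht : 0 ≤ ht)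
    (hwl' : 0 ≤ wl') (hwr' : 0 ≤ wr') (hhb' : 0 ≤ hb') (hht' : 0 ≤ ht')
    (hw : 0 < wl + wr) (hh : 0 < hb + ht) (hw' : 0 < wl' + wr') (hh' : 0 < hb' + ht') :
    ∃ A₁ A₂ A₃ A₄ : Set Real.Angle,
      IsClosedArc A₁ ∧ IsClosedArc A₂ ∧ IsClosedArc A₃ ∧ IsClosedArc A₄ ∧
      conflictSet p p' (rectLabel p wl wr hb ht) (rectLabel p' wl' wr' hb' ht') =
        A₁ ∪ A₂ ∪ A₃ ∪ A₄ :=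
  conflictSet_union_four_arcs_general p p' wl wr hb ht wl' wr' hb' ht' hw hh hw' hh'
end

section
/- Let ℓ and ℓ' be labels with anchors p and p' = p + (d,0), d > 0. If at an angle α the rotated labels ℓ(α) and ℓ'(α) intersect but their interiors are disjoint (a conflict event), then α, taken modulo 2π, belongs to the set 𝒞 = {2π − arcsin((h_t+h'_b)/d), π + arcsin((h_t+h'_b)/d), arcsin((h_b+h'_t)/d), π − arcsin((h_b+h'_t)/d), 2π − arccos((w_r+w'_l)/d), arccos((w_r+w'_l)/d), π − arccos((w_l+w'_r)/d), π + arccos((w_l+w'_r)/d)}. -/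
/-!
Rotating both labels back by `-α` about `p` turns a conflict into two axis-parallel rectangles,
anchored at `p` and at `p + (d cos α, -d sin α)`, that meet but have disjoint interiors. Such
rectangles share a side line, so `d cos α` is `w_r + w'_l` or `-(w_l + w'_r)`, or `-d sin α` is
`h_t + h'_b` or `-(h_b + h'_t)`; each of these four equations leaves two angles modulo `2π`.
-/

open Real Set

lemma rot_add (α : ℝ) (u v : ℝ × ℝ) : rot α (u + v) = rot α u + rot α v := by
  ext <;> simp only [rot, Prod.fst_add, Prod.snd_add] <;> ring

lemma rot_rot (α β : ℝ) (v : ℝ × ℝ) : rot α (rot β v) = rot (α + β) v := by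
  ext <;> simp only [rot, cos_add, sin_add] <;> ring

lemma rot_zero (v : ℝ × ℝ) : rot 0 v = v := by
  simp [rot]

lemma rot_rot_neg (α : ℝ) (v : ℝ × ℝ) : rot α (rot (-α) v) = v := by
  rw [rot_rot, add_neg_cancel, rot_zero]

lemma rot_neg_apply_fst_zero (α d : ℝ) : rot (-α) (d, 0) = (d * cos α, -(d * sin α)) := by
  simp [rot]

lemma continuous_rot (α : ℝ) : Continuous (rot α) := by
  unfold rot; fun_prop

lemma isHomeomorph_rot (α : ℝ) : IsHomeomorph (rot α) :=
  isHomeomorph_iff_exists_inverse.2 ⟨continuous_rot α, rot (-α),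
    fun v => by simpa using rot_rot_neg (-α) v, rot_rot_neg α, continuous_rot (-α)⟩

lemma isHomeomorph_rotAbout (p : ℝ × ℝ) (α : ℝ) :
    IsHomeomorph (fun x => p + rot α (x - p)) :=
  (Homeomorph.addLeft p).isHomeomorph.comp
    ((isHomeomorph_rot α).comp (Homeomorph.subRight p).isHomeomorph)

lemma rotAbout_inter_nonempty_iff (p : ℝ × ℝ) (α : ℝ) (s t : Set (ℝ × ℝ)) :
    (rotAbout p α s ∩ rotAbout p α t).Nonempty ↔ (s ∩ t).Nonempty := by
  rw [rotAbout, rotAbout, ← image_inter (isHomeomorph_rotAbout p α).injective, image_nonempty]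

lemma interior_rotAbout_inter_eq_empty_iff (p : ℝ × ℝ) (α : ℝ) (s t : Set (ℝ × ℝ)) :
    interior (rotAbout p α s) ∩ interior (rotAbout p α t) = ∅ ↔
      interior s ∩ interior t = ∅ := by
  have hf := isHomeomorph_rotAbout p α
  rw [rotAbout, rotAbout, ← hf.image_interior, ← hf.image_interior,
    ← image_inter hf.injective, image_eq_empty]

lemma rotAbout_eq_rotAbout_image_add (p q : ℝ × ℝ) (α : ℝ) (s : Set (ℝ × ℝ)) :
    rotAbout q α s = rotAbout p α ((· + (p - q + rot (-α) (q - p))) '' s) := by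
  rw [rotAbout, rotAbout, image_image]
  congr 1
  funext x
  rw [show x + (p - q + rot (-α) (q - p)) - p = (x - q) + rot (-α) (q - p) by abel, rot_add,
    rot_rot_neg]
  abel

lemma image_add_const_rectLabel (c q : ℝ × ℝ) (wl wr hb ht : ℝ) :
    (· + c) '' rectLabel q wl wr hb ht = rectLabel (q + c) wl wr hb ht := by
  rw [rectLabel, rectLabel, image_add_const_Icc]
  congr 1 <;> ext <;> simp only [Prod.fst_add, Prod.snd_add] <;> ring

lemma rotAbout_rectLabel (p q : ℝ × ℝ) (α : ℝ) (wl wr hb ht : ℝ) :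
    rotAbout q α (rectLabel q wl wr hb ht) =
      rotAbout p α (rectLabel (p + rot (-α) (q - p)) wl wr hb ht) := by
  rw [rotAbout_eq_rotAbout_image_add p, image_add_const_rectLabel]
  congr 2
  abel

lemma rectLabel_eq_prod (q : ℝ × ℝ) (wl wr hb ht : ℝ) :
    rectLabel q wl wr hb ht = Icc (q.1 - wl) (q.1 + wr) ×ˢ Icc (q.2 - hb) (q.2 + ht) :=
  Icc_prod_eq _ _

lemma interior_rectLabel (q : ℝ × ℝ) (wl wr hb ht : ℝ) :
    interior (rectLabel q wl wr hb ht) =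
      Ioo (q.1 - wl) (q.1 + wr) ×ˢ Ioo (q.2 - hb) (q.2 + ht) := by
  rw [rectLabel_eq_prod, interior_prod_eq, interior_Icc, interior_Icc]

lemma eq_or_eq_of_Icc_inter_nonempty_of_Ioo_inter_eq_empty {X : Type*} [LinearOrder X]
    [DenselyOrdered X] {a b a' b' : X} (hab : a < b) (hab' : a' < b')
    (hmeet : (Icc a b ∩ Icc a' b').Nonempty) (hint : Ioo a b ∩ Ioo a' b' = ∅) :
    b = a' ∨ b' = a := by
  obtain ⟨x, ⟨hax, hxb⟩, ha'x, hxb'⟩ := hmeet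
  rw [Ioo_inter_Ioo, Ioo_eq_empty_iff, not_lt, inf_le_iff, le_sup_iff, le_sup_iff] at hint
  rcases hint with (h | h) | (h | h)
  · exact absurd h (not_le.2 hab)
  · exact Or.inl (le_antisymm h (ha'x.trans hxb))
  · exact Or.inr (le_antisymm h (hax.trans hxb'))
  · exact absurd h (not_le.2 hab')

lemma rectLabel_sides_eq {q q' : ℝ × ℝ} {wl wr hb ht wl' wr' hb' ht' : ℝ}
    (hw : 0 < wl + wr) (hh : 0 < hb + ht) (hw' : 0 < wl' + wr') (hh' : 0 < hb' + ht')
    (hmeet : (rectLabel q wl wr hb ht ∩ rectLabel q' wl' wr' hb' ht').Nonempty)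
    (hint : interior (rectLabel q wl wr hb ht) ∩ interior (rectLabel q' wl' wr' hb' ht') = ∅) :
    q.1 + wr = q'.1 - wl' ∨ q'.1 + wr' = q.1 - wl ∨
      q.2 + ht = q'.2 - hb' ∨ q'.2 + ht' = q.2 - hb := by
  rw [rectLabel_eq_prod, rectLabel_eq_prod, prod_inter_prod, prod_nonempty_iff] at hmeet
  rw [interior_rectLabel, interior_rectLabel, prod_inter_prod, prod_eq_empty_iff] at hint
  rcases hint with h | h
  · have := eq_or_eq_of_Icc_inter_nonempty_of_Ioo_inter_eq_empty (by linarith) (by linarith)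
      hmeet.1 h
    tauto
  · have := eq_or_eq_of_Icc_inter_nonempty_of_Ioo_inter_eq_empty (by linarith) (by linarith)
      hmeet.2 h
    tauto

lemma coe_two_pi_sub (x : ℝ) : ((2 * π - x : ℝ) : Real.Angle) = -x := by
  rw [Real.Angle.coe_sub, Real.Angle.coe_two_pi, zero_sub]

lemma coe_eq_arccos_or_two_pi_sub_arccos {α c : ℝ} (h : cos α = c) :
    (α : Real.Angle) = arccos c ∨ (α : Real.Angle) = (2 * π - arccos c : ℝ) := by
  have : cos α = cos (arccos c) := by
    rw [cos_arccos (h ▸ neg_one_le_cos α) (h ▸ cos_le_one α), h]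
  rw [coe_two_pi_sub, ← Real.Angle.coe_neg]
  exact Real.Angle.cos_eq_iff_coe_eq_or_eq_neg.1 this

lemma coe_eq_pi_sub_arccos_or_pi_add_arccos {α c : ℝ} (h : cos α = -c) :
    (α : Real.Angle) = (π - arccos c : ℝ) ∨ (α : Real.Angle) = (π + arccos c : ℝ) := by
  have : cos α = cos (π - arccos c) := by
    rw [cos_pi_sub, cos_arccos (by linarith [cos_le_one α]) (by linarith [neg_one_le_cos α]), h]
  refine (Real.Angle.cos_eq_iff_coe_eq_or_eq_neg.1 this).imp id fun h' => ?_
  rw [h', Real.Angle.coe_add, Real.Angle.coe_sub, neg_sub, sub_eq_add_neg,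
    Real.Angle.neg_coe_pi, add_comm]

lemma coe_eq_arcsin_or_pi_sub_arcsin {α s : ℝ} (h : sin α = s) :
    (α : Real.Angle) = arcsin s ∨ (α : Real.Angle) = (π - arcsin s : ℝ) := by
  have : sin α = sin (arcsin s) := by
    rw [sin_arcsin (h ▸ neg_one_le_sin α) (h ▸ sin_le_one α), h]
  exact (Real.Angle.sin_eq_iff_coe_eq_or_add_eq_pi.1 this).imp id fun h' => by
    rw [Real.Angle.coe_sub, eq_sub_of_add_eq h']

lemma coe_eq_two_pi_sub_arcsin_or_pi_add_arcsin {α s : ℝ} (h : sin α = -s) :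
    (α : Real.Angle) = (2 * π - arcsin s : ℝ) ∨
      (α : Real.Angle) = (π + arcsin s : ℝ) := by
  have : sin α = sin (-arcsin s) := by
    rw [sin_neg, sin_arcsin (by linarith [sin_le_one α]) (by linarith [neg_one_le_sin α]), h]
  rw [coe_two_pi_sub, ← Real.Angle.coe_neg]
  refine (Real.Angle.sin_eq_iff_coe_eq_or_add_eq_pi.1 this).imp id fun h' => ?_
  rw [eq_sub_of_add_eq h', Real.Angle.coe_neg, sub_neg_eq_add, Real.Angle.coe_add]

theorem conflict_event_mem_general
    (p : ℝ × ℝ) (d : ℝ) (hd : 0 < d)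
    (wl wr hb ht wl' wr' hb' ht' : ℝ)
    (hw : 0 < wl + wr) (hh : 0 < hb + ht) (hw' : 0 < wl' + wr') (hh' : 0 < hb' + ht')
    (α : ℝ)
    (hmeet : (rotAbout p α (rectLabel p wl wr hb ht) ∩
        rotAbout (p + (d, 0)) α (rectLabel (p + (d, 0)) wl' wr' hb' ht')).Nonempty)
    (hint : interior (rotAbout p α (rectLabel p wl wr hb ht)) ∩
        interior (rotAbout (p + (d, 0)) α (rectLabel (p + (d, 0)) wl' wr' hb' ht')) = ∅) :
    (α : Real.Angle) ∈ (fun x : ℝ => (x : Real.Angle)) ''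
      ({2 * π - Real.arcsin ((ht + hb') / d), π + Real.arcsin ((ht + hb') / d),
        Real.arcsin ((hb + ht') / d), π - Real.arcsin ((hb + ht') / d),
        2 * π - Real.arccos ((wr + wl') / d), Real.arccos ((wr + wl') / d),
        π - Real.arccos ((wl + wr') / d), π + Real.arccos ((wl + wr') / d)} : Set ℝ) := by
  rw [rotAbout_rectLabel p (p + (d, 0)), add_sub_cancel_left, rot_neg_apply_fst_zero]
    at hmeet hint
  rw [rotAbout_inter_nonempty_iff] at hmeet
  rw [interior_rotAbout_inter_eq_empty_iff] at hint
  have hsides := rectLabel_sides_eq hw hh hw' hh' hmeet hint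
  simp only [Prod.fst_add, Prod.snd_add] at hsides
  rcases hsides with hside | hside | hside | hside
  · have hcos : cos α = (wr + wl') / d := by field_simp; linarith
    rcases coe_eq_arccos_or_two_pi_sub_arccos hcos with hα | hα <;>
      exact ⟨_, by simp, hα.symm⟩
  · have hcos : cos α = -((wl + wr') / d) := by field_simp; linarith
    rcases coe_eq_pi_sub_arccos_or_pi_add_arccos hcos with hα | hα <;>
      exact ⟨_, by simp, hα.symm⟩
  · have hsin : sin α = -((ht + hb') / d) := by field_simp; linarith
    rcases coe_eq_two_pi_sub_arcsin_or_pi_add_arcsin hsin with hα | hα <;>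
      exact ⟨_, by simp, hα.symm⟩
  · have hsin : sin α = (hb + ht') / d := by field_simp; linarith
    rcases coe_eq_arcsin_or_pi_sub_arcsin hsin with hα | hα <;>
      exact ⟨_, by simp, hα.symm⟩

/-- If at angle `α` the two rotated labels intersect but their interiors are disjoint
(a conflict event), then `α` modulo `2π` belongs to the eight-element set `𝒞`. -/
theorem conflict_event_mem
    (p : ℝ × ℝ) (d : ℝ) (hd : 0 < d)
    (wl wr hb ht wl' wr' hb' ht' : ℝ)
    (hwl : 0 ≤ wl) (hwr : 0 ≤ wr) (hhb : 0 ≤ hb) (hht : 0 ≤ ht)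
    (hwl' : 0 ≤ wl') (hwr' : 0 ≤ wr') (hhb' : 0 ≤ hb') (hht' : 0 ≤ ht')
    (hw : 0 < wl + wr) (hh : 0 < hb + ht) (hw' : 0 < wl' + wr') (hh' : 0 < hb' + ht')
    (α : ℝ)
    (hmeet : (rotAbout p α (rectLabel p wl wr hb ht) ∩
        rotAbout (p + (d, 0)) α (rectLabel (p + (d, 0)) wl' wr' hb' ht')).Nonempty)
    (hint : interior (rotAbout p α (rectLabel p wl wr hb ht)) ∩
        interior (rotAbout (p + (d, 0)) α (rectLabel (p + (d, 0)) wl' wr' hb' ht')) = ∅) :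
    (α : Real.Angle) ∈ (fun x : ℝ => (x : Real.Angle)) ''
      ({2 * π - Real.arcsin ((ht + hb') / d), π + Real.arcsin ((ht + hb') / d),
        Real.arcsin ((hb + ht') / d), π - Real.arcsin ((hb + ht') / d),
        2 * π - Real.arccos ((wr + wl') / d), Real.arccos ((wr + wl') / d),
        π - Real.arccos ((wl + wr') / d), π + Real.arccos ((wl + wr') / d)} : Set ℝ) :=
  conflict_event_mem_general p d hd wl wr hb ht wl' wr' hb' ht' hw hh hw' hh' α hmeet hint
end

section
/- Let ℓ and ℓ' be labels with anchors p and p' = p + (d,0), d > 0, and let t(α) denote the rotated top side of ℓ(α) and b'(α) the rotated bottom side of ℓ'(α) (closed segments). If t(α) ∩ b'(α) ≠ ∅, then d · sin α = −(h_t + h'_b); in particular d ≥ h_t + h'_b and α modulo 2π lies in {2π − arcsin((h_t+h'_b)/d), π + arcsin((h_t+h'_b)/d)}. -/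
/-!
A point of the rotated top side `t(α)` lies on the line through `p` with unit normal
`(-sin α, cos α)` at signed distance `h_t`, and a point of `b'(α)` on the parallel line through
`p' = p + (d, 0)` at signed distance `-h'_b`. A common point forces the signed distance between
these lines, `-d sin α`, to equal `h_t + h'_b`. The angle is then recovered from its sine.
-/

open Real Set

/-- The top side of the label anchored at `p` (at rotation 0). -/
noncomputable def topSide (p : ℝ × ℝ) (wl wr ht : ℝ) : Set (ℝ × ℝ) :=
  Set.Icc (p.1 - wl, p.2 + ht) (p.1 + wr, p.2 + ht)

/-- The bottom side of the label anchored at `p` (at rotation 0). -/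
noncomputable def botSide (p : ℝ × ℝ) (wl wr hb : ℝ) : Set (ℝ × ℝ) :=
  Set.Icc (p.1 - wl, p.2 - hb) (p.1 + wr, p.2 - hb)

lemma rot_normal_coord (α : ℝ) (v : ℝ × ℝ) :
    (rot α v).2 * cos α - (rot α v).1 * sin α = v.2 := by
  simp only [rot]
  linear_combination v.2 * sin_sq_add_cos_sq α

lemma normal_coord_of_mem_rotAbout {p z : ℝ × ℝ} {α c : ℝ} {s : Set (ℝ × ℝ)}
    (hs : ∀ x ∈ s, x.2 = p.2 + c) (hz : z ∈ rotAbout p α s) :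
    (z.2 - p.2) * cos α - (z.1 - p.1) * sin α = c := by
  obtain ⟨x, hx, rfl⟩ := hz
  have := rot_normal_coord α (x - p)
  simp only [Prod.fst_add, Prod.snd_add, add_sub_cancel_left, Prod.snd_sub] at this ⊢
  linarith [hs x hx]

lemma snd_eq_of_mem_topSide {p x : ℝ × ℝ} {wl wr ht : ℝ} (hx : x ∈ topSide p wl wr ht) :
    x.2 = p.2 + ht :=
  le_antisymm hx.2.2 hx.1.2

lemma snd_eq_of_mem_botSide {p x : ℝ × ℝ} {wl wr hb : ℝ} (hx : x ∈ botSide p wl wr hb) :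
    x.2 = p.2 + -hb :=
  (le_antisymm hx.2.2 hx.1.2).trans (sub_eq_add_neg _ _)

lemma Real.Angle.coe_eq_arcsin_sin_or_eq_pi_sub_arcsin_sin (α : ℝ) :
    (α : Angle) = (arcsin (sin α) : ℝ) ∨ (α : Angle) = ((π - arcsin (sin α) : ℝ) : Angle) := by
  have hsin : sin α = sin (arcsin (sin α)) := (sin_arcsin (neg_one_le_sin α) (sin_le_one α)).symm
  rcases Angle.sin_eq_iff_coe_eq_or_add_eq_pi.mp hsin with h | h
  · exact Or.inl h
  · exact Or.inr (by rw [Angle.coe_sub, ← h, add_sub_cancel_right])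

theorem top_bottom_conflict_event_general
    (p : ℝ × ℝ) (d : ℝ) (hd : 0 < d)
    (wl wr ht wl' wr' hb' : ℝ)
    (α : ℝ)
    (hmeet : (rotAbout p α (topSide p wl wr ht) ∩
        rotAbout (p + (d, 0)) α (botSide (p + (d, 0)) wl' wr' hb')).Nonempty) :
    d * Real.sin α = -(ht + hb') ∧ ht + hb' ≤ d ∧
      ((α : Real.Angle) = ((2 * π - Real.arcsin ((ht + hb') / d) : ℝ) : Real.Angle) ∨
       (α : Real.Angle) = ((π + Real.arcsin ((ht + hb') / d) : ℝ) : Real.Angle)) := by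
  obtain ⟨z, hz_top, hz_bot⟩ := hmeet
  have h_top := normal_coord_of_mem_rotAbout (fun _ => snd_eq_of_mem_topSide) hz_top
  have h_bot := normal_coord_of_mem_rotAbout (fun _ => snd_eq_of_mem_botSide) hz_bot
  simp only [Prod.fst_add, Prod.snd_add, add_zero] at h_bot
  have h_dsin : d * sin α = -(ht + hb') := by linarith
  have h_arcsin : arcsin ((ht + hb') / d) = -arcsin (sin α) := by
    rw [← arcsin_neg]
    congr 1
    rw [div_eq_iff hd.ne']
    linarith
  refine ⟨h_dsin, by nlinarith [neg_one_le_sin α], ?_⟩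
  rw [h_arcsin, sub_neg_eq_add, ← sub_eq_add_neg, Angle.coe_add, Angle.coe_two_pi, zero_add]
  exact Angle.coe_eq_arcsin_sin_or_eq_pi_sub_arcsin_sin α

/-- If the rotated top side `t(α)` of `ℓ` meets the rotated bottom side `b'(α)` of `ℓ'`
(anchors at distance `d` on a horizontal line), then `d·sin α = −(h_t + h'_b)`;
in particular `d ≥ h_t + h'_b` and `α` modulo `2π` lies in
`{2π − arcsin((h_t+h'_b)/d), π + arcsin((h_t+h'_b)/d)}`. -/
theorem top_bottom_conflict_event
    (p : ℝ × ℝ) (d : ℝ) (hd : 0 < d)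
    (wl wr hb ht wl' wr' hb' ht' : ℝ)
    (hwl : 0 ≤ wl) (hwr : 0 ≤ wr) (hhb : 0 ≤ hb) (hht : 0 ≤ ht)
    (hwl' : 0 ≤ wl') (hwr' : 0 ≤ wr') (hhb' : 0 ≤ hb') (hht' : 0 ≤ ht')
    (hw : 0 < wl + wr) (hh : 0 < hb + ht) (hw' : 0 < wl' + wr') (hh' : 0 < hb' + ht')
    (α : ℝ)
    (hmeet : (rotAbout p α (topSide p wl wr ht) ∩
        rotAbout (p + (d, 0)) α (botSide (p + (d, 0)) wl' wr' hb')).Nonempty) :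
    d * Real.sin α = -(ht + hb') ∧ ht + hb' ≤ d ∧
      ((α : Real.Angle) = ((2 * π - Real.arcsin ((ht + hb') / d) : ℝ) : Real.Angle) ∨
       (α : Real.Angle) = ((π + Real.arcsin ((ht + hb') / d) : ℝ) : Real.Angle)) :=
  top_bottom_conflict_event_general p d hd wl wr ht wl' wr' hb' α hmeet
end

section
/- Let L be a finite family of pairwise disjoint closed axis-aligned unit squares in ℝ², each anchored at its lower-left corner. Then every label ℓ ∈ L is in conflict at some rotation angle with at most 56 other labels of L. -/
/-!
A label conflicting with `p` at some angle has its anchor within sup-distance `2` of `p`, since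
the displacement of the anchors is a rotated difference of two points of `[0,1]²`. Hence all the
conflicting labels lie in the `5 × 5` square `p + [-2,3]²`, and, being pairwise disjoint unit
squares, there are at most `25` of them by comparing areas.
-/

open Real Set

/-- The unit-square label anchored at its lower-left corner `p`, rotated by `α` about `p`:
`ℓ(α) = p + R_α([0,1]²)`. -/
noncomputable def unitSq (p : ℝ × ℝ) (α : ℝ) : Set (ℝ × ℝ) :=
  (fun v => p + rot α v) '' Set.Icc ((0, 0) : ℝ × ℝ) (1, 1)

open MeasureTheory

lemma norm_rot_le (α : ℝ) (v : ℝ × ℝ) : ‖rot α v‖ ≤ 2 * ‖v‖ := by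
  have hv₁ : |v.1| ≤ ‖v‖ := norm_fst_le v
  have hv₂ : |v.2| ≤ ‖v‖ := norm_snd_le v
  have key : ∀ a b : ℝ, |a| ≤ 1 → |b| ≤ 1 → |v.1 * a| + |v.2 * b| ≤ 2 * ‖v‖ := by
    intro a b ha hb
    rw [abs_mul, abs_mul]
    nlinarith [abs_nonneg v.1, abs_nonneg v.2]
  have hc := abs_cos_le_one α
  have hs := abs_sin_le_one α
  exact norm_prod_le_iff.2
    ⟨(abs_sub _ _).trans (key _ _ hc hs), (abs_add_le _ _).trans (key _ _ hs hc)⟩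

lemma norm_sub_le_one_of_mem_Icc {v w : ℝ × ℝ} (hv : v ∈ Icc (0 : ℝ × ℝ) (1, 1))
    (hw : w ∈ Icc (0 : ℝ × ℝ) (1, 1)) : ‖w - v‖ ≤ 1 :=
  norm_prod_le_iff.2
    ⟨Real.dist_le_of_mem_Icc_01 ⟨hw.1.1, hw.2.1⟩ ⟨hv.1.1, hv.2.1⟩,
      Real.dist_le_of_mem_Icc_01 ⟨hw.1.2, hw.2.2⟩ ⟨hv.1.2, hv.2.2⟩⟩

lemma norm_sub_le_two_of_unitSq_inter_nonempty {p q : ℝ × ℝ} {α : ℝ}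
    (h : (unitSq q α ∩ unitSq p α).Nonempty) : ‖q - p‖ ≤ 2 := by
  obtain ⟨x, ⟨v, hv, rfl⟩, ⟨w, hw, hvw⟩⟩ := h
  have hdiff : q - p = rot α (w - v) := by
    have := congrArg (· - rot α v) hvw
    simp only [rot, Prod.ext_iff, Prod.fst_sub, Prod.snd_sub, Prod.fst_add, Prod.snd_add] at this ⊢
    constructor <;> linarith [this.1, this.2]
  calc ‖q - p‖ = ‖rot α (w - v)‖ := by rw [hdiff]
    _ ≤ 2 * ‖w - v‖ := norm_rot_le α _
    _ ≤ 2 * 1 := by gcongr; exact norm_sub_le_one_of_mem_Icc hv hw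
    _ = 2 := mul_one 2

lemma Icc_add_one_subset_of_norm_sub_le {p q : ℝ × ℝ} {r : ℝ} (h : ‖q - p‖ ≤ r) :
    Icc q (q + (1, 1)) ⊆ Icc (p - (r, r)) (p + (r + 1, r + 1)) := by
  obtain ⟨h₁, h₂⟩ := norm_prod_le_iff.1 h
  rw [Prod.fst_sub, Real.norm_eq_abs, abs_le] at h₁
  rw [Prod.snd_sub, Real.norm_eq_abs, abs_le] at h₂
  intro y hy
  simp only [mem_Icc, Prod.le_def, Prod.fst_add, Prod.snd_add, Prod.fst_sub, Prod.snd_sub] at hy ⊢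
  refine ⟨⟨?_, ?_⟩, ?_, ?_⟩ <;> linarith

lemma volume_Icc_prod (a b : ℝ × ℝ) :
    volume (Icc a b) = ENNReal.ofReal (b.1 - a.1) * ENNReal.ofReal (b.2 - a.2) := by
  rw [← Icc_prod_Icc, Measure.volume_eq_prod, Measure.prod_prod, Real.volume_Icc, Real.volume_Icc]

lemma card_mul_le_measure_of_pairwiseDisjoint {α ι : Type*} [MeasurableSpace α] (μ : Measure α)
    {F : Finset ι} {s : ι → Set α} {K : Set α} {c : ENNReal}
    (hmeas : ∀ i ∈ F, MeasurableSet (s i)) (hdisj : (F : Set ι).PairwiseDisjoint s)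
    (hsub : ∀ i ∈ F, s i ⊆ K) (hc : ∀ i ∈ F, c ≤ μ (s i)) : F.card * c ≤ μ K :=
  calc F.card * c = F.card • c := (nsmul_eq_mul _ _).symm
    _ ≤ ∑ i ∈ F, μ (s i) := Finset.card_nsmul_le_sum _ _ _ hc
    _ = μ (⋃ i ∈ F, s i) := (measure_biUnion_finset hdisj hmeas).symm
    _ ≤ μ K := measure_mono (iUnion₂_subset hsub)

theorem conflicts_per_label_bound_general (L : Finset (ℝ × ℝ))
    (hdisj : ∀ p ∈ L, ∀ q ∈ L, p ≠ q →
      Set.Icc p (p + (1, 1)) ∩ Set.Icc q (q + (1, 1)) = ∅)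
    (p : ℝ × ℝ) :
    {q ∈ (L : Set (ℝ × ℝ)) | q ≠ p ∧
      ∃ α : ℝ, (unitSq q α ∩ unitSq p α).Nonempty}.ncard ≤ 56 := by
  classical
  set F := L.filter fun q => q ≠ p ∧ ∃ α : ℝ, (unitSq q α ∩ unitSq p α).Nonempty
  have hF : {q ∈ (L : Set (ℝ × ℝ)) | q ≠ p ∧ ∃ α : ℝ, (unitSq q α ∩ unitSq p α).Nonempty} = F :=
    (Finset.coe_filter _ _).symm
  rw [hF, Set.ncard_coe_finset]
  have hsub : ∀ q ∈ F, Icc q (q + (1, 1)) ⊆ Icc (p - (2, 2)) (p + (2 + 1, 2 + 1)) := by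
    intro q hq
    obtain ⟨-, -, α, hconf⟩ := Finset.mem_filter.1 hq
    exact Icc_add_one_subset_of_norm_sub_le (norm_sub_le_two_of_unitSq_inter_nonempty hconf)
  have hpair : (F : Set (ℝ × ℝ)).PairwiseDisjoint fun q => Icc q (q + (1, 1)) :=
    fun a ha b hb hab => disjoint_iff_inter_eq_empty.2
      (hdisj a (Finset.mem_filter.1 ha).1 b (Finset.mem_filter.1 hb).1 hab)
  have hunit : ∀ q : ℝ × ℝ, volume (Icc q (q + (1, 1))) = 1 := fun q => by
    rw [volume_Icc_prod]; simp
  have hbig : volume (Icc (p - (2, 2)) (p + (2 + 1, 2 + 1))) = 25 := by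
    rw [volume_Icc_prod]; norm_num
  have hcard : (F.card : ENNReal) * 1 ≤ 25 := hbig ▸
    card_mul_le_measure_of_pairwiseDisjoint volume (fun _ _ => measurableSet_Icc) hpair hsub
      fun q _ => (hunit q).ge
  calc F.card ≤ 25 := by exact_mod_cast (mul_one (F.card : ENNReal)) ▸ hcard
    _ ≤ 56 := by norm_num

/-- In a finite family of pairwise disjoint unit-square labels anchored at their
lower-left corners, every label is in conflict (at some rotation angle) with at most
56 other labels of the family. -/
theorem conflicts_per_label_bound (L : Finset (ℝ × ℝ))
    (hdisj : ∀ p ∈ L, ∀ q ∈ L, p ≠ q →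
      Set.Icc p (p + (1, 1)) ∩ Set.Icc q (q + (1, 1)) = ∅)
    (p : ℝ × ℝ) (hp : p ∈ L) :
    {q ∈ (L : Set (ℝ × ℝ)) | q ≠ p ∧
      ∃ α : ℝ, (unitSq q α ∩ unitSq p α).Nonempty}.ncard ≤ 56 :=
  conflicts_per_label_bound_general L hdisj p
end
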